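/- Random-turn upper value: for every finite game tree G, there exists a pure strategy τ for Bob such that for every pure strategy σ for Alice, the probability that Alice wins the random-turn game satisfies Pr(G, σ, τ) ≤ P(G). -/

import Mathlib

/-- The two players. -/
inductive Player : Type
  | alice
  | bob

/-- A finite game tree: either a leaf labeled with the player who wins there,
or an internal node with a nonempty finite list of children (the positions
either player may move to), encoded as a head child `first` plus the
remaining children `rest`. -/
inductive GameTree : Type
  | leaf (winner : Player)
  | node (first : GameTree) (rest : List GameTree)

namespace GameTree

/-- The random-turn value (probability that Alice wins under optimal play when
a fair coin decides who moves): `P (leaf alice) = 1`, `P (leaf bob) = 0`, and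
at an internal node it is the average of the maximum and minimum of the values
of the children. -/
noncomputable def P : GameTree → ℝ
  | leaf .alice => 1
  | leaf .bob => 0
  | node c cs =>
      ((cs.attach.map fun w => P w.1).foldr max (P c) +
       (cs.attach.map fun w => P w.1).foldr min (P c)) / 2
decreasing_by
  all_goals simp only [GameTree.node.sizeOf_spec]
  all_goals try omega
  all_goals (have h := List.sizeOf_lt_of_mem w.2; omega)

/-- A pure strategy: a function assigning to each internal node one of its
children. -/
structure Strategy where
  move : GameTree → GameTree
  move_mem : ∀ (c : GameTree) (cs : List GameTree), move (node c cs) ∈ c :: cs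

theorem sizeOf_lt_of_mem_children {w c : GameTree} {cs : List GameTree}
    (h : w ∈ c :: cs) : sizeOf w < sizeOf (node c cs) := by
  rcases List.mem_cons.mp h with rfl | h
  · simp only [node.sizeOf_spec]; omega
  · have := List.sizeOf_lt_of_mem h
    simp only [node.sizeOf_spec]; omega

/-- The probability that Alice wins the random-turn game when Alice plays the
pure strategy `σ` and Bob plays the pure strategy `τ`: at each internal node a
fair coin flip decides which player's strategy makes the move. -/
noncomputable def Pr (σ τ : Strategy) : GameTree → ℝ
  | leaf .alice => 1
  | leaf .bob => 0
  | node c cs =>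
      (Pr σ τ (σ.move (node c cs)) + Pr σ τ (τ.move (node c cs))) / 2
termination_by g => sizeOf g
decreasing_by
  · exact sizeOf_lt_of_mem_children (σ.move_mem c cs)
  · exact sizeOf_lt_of_mem_children (τ.move_mem c cs)

end GameTree

/-! Bob always moves to a child of least value. By induction on the tree, whatever child
Alice picks has value at most the maximum over the children, while Bob's child has exactly
the minimum, so the coin-flip average is at most `P` of the node. -/

namespace List

variable {α : Type*} [LinearOrder α]

theorem foldr_min_mem_cons (a : α) (l : List α) : l.foldr min a ∈ a :: l := by
  induction l with
  | nil => exact mem_cons_self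
  | cons x l ih => grind

theorem le_foldr_max_of_mem_cons {a x : α} {l : List α} (hx : x ∈ a :: l) :
    x ≤ l.foldr max a := by
  induction l with
  | nil => simp_all
  | cons y l ih => grind

end List

namespace GameTree

theorem P_node (c : GameTree) (cs : List GameTree) :
    P (node c cs) = ((cs.map P).foldr max (P c) + (cs.map P).foldr min (P c)) / 2 := by
  rw [P, List.attach_map_val]

theorem exists_mem_P_eq_foldr_min (c : GameTree) (cs : List GameTree) :
    ∃ w ∈ c :: cs, P w = (cs.map P).foldr min (P c) := by
  simpa only [← List.map_cons, List.mem_map, eq_comm] using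
    List.foldr_min_mem_cons (P c) (cs.map P)

noncomputable def minStrategy : Strategy where
  move
    | leaf p => leaf p
    | node c cs => (exists_mem_P_eq_foldr_min c cs).choose
  move_mem c cs := (exists_mem_P_eq_foldr_min c cs).choose_spec.1

theorem Pr_minStrategy_le_P (σ : Strategy) (g : GameTree) : Pr σ minStrategy g ≤ P g := by
  match g with
  | leaf .alice => simp only [Pr, P, le_refl]
  | leaf .bob => simp only [Pr, P, le_refl]
  | node c cs =>
    have hσ := σ.move_mem c cs
    have hτ := minStrategy.move_mem c cs
    have ih_σ := Pr_minStrategy_le_P σ (σ.move (node c cs))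
    have ih_τ := Pr_minStrategy_le_P σ (minStrategy.move (node c cs))
    have h_max := List.le_foldr_max_of_mem_cons (List.mem_map_of_mem (f := P) hσ)
    have h_min := (exists_mem_P_eq_foldr_min c cs).choose_spec.2
    rw [Pr, P_node]
    exact div_le_div_of_nonneg_right (add_le_add (ih_σ.trans h_max) (ih_τ.trans_eq h_min))
      zero_le_two
termination_by sizeOf g
decreasing_by
  · exact sizeOf_lt_of_mem_children hσ
  · exact sizeOf_lt_of_mem_children hτ

/-- **Random-turn upper value.** For every finite game tree `G`, Bob has a
pure strategy `τ` limiting Alice's winning probability to at most `P(G)`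
against every pure strategy `σ` of Alice. -/
theorem randomTurn_upper_value (G : GameTree) :
    ∃ τ : Strategy, ∀ σ : Strategy, Pr σ τ G ≤ P G :=
  ⟨minStrategy, fun σ => Pr_minStrategy_le_P σ G⟩

end GameTree
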